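/- arXiv:2009.07387 — 2 statements merged into one kernel-verified Lean document; each statement's English description precedes it below -/
import Mathlib

section
/- Let f : [x̲, x̄] → ℝ be a C¹ convex function on an interval with midpoint m and radius ρ > 0. Set y̲ = f(x̲), ȳ = f(x̄), ym = (ȳ + y̲)/2, yr = (ȳ - y̲)/2, and define r(δ) = f(m + ρδ) - (ym + yr·δ) for δ ∈ [-1,1]. Let δ* ∈ [-1,1] satisfy f'(m + ρδ*) = yr/ρ. Then for all δ ∈ [-1,1], r(δ*) ≤ r(δ) ≤ 0, and consequently for every x ∈ [x̲, x̄] there exists ε ∈ [-1,1] with f(x) = ym + (1/2)r(δ*) + yr·((x - m)/ρ) + (1/2)|r(δ*)|·ε. -/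
/-!
In the unit coordinate `δ = (x - m) / ρ`, the remainder `r` is `δ ↦ f (m + ρ δ)` minus its
secant through `δ = ±1`. Convexity puts the graph below that secant, so `r ≤ 0`, and above its
tangent at `δ*`, which is parallel to the secant, so `r (δ*) ≤ r`. Every value of `f` is thus
the affine part plus a number of the interval `[r (δ*), 0]`, whose midpoint is `r (δ*) / 2`
and whose radius is `|r (δ*)| / 2`.
-/

open Set

lemma ConvexOn.add_mul_sub_le_of_hasDerivAt {S : Set ℝ} {f : ℝ → ℝ} {x y f' : ℝ}
    (hf : ConvexOn ℝ S f) (hx : x ∈ S) (hy : y ∈ S) (hd : HasDerivAt f f' x) :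
    f x + f' * (y - x) ≤ f y := by
  rcases lt_trichotomy y x with hyx | rfl | hxy
  · have h := hf.slope_le_of_hasDerivAt hy hx hyx hd
    rw [slope_def_field, div_le_iff₀ (sub_pos.2 hyx)] at h
    linarith
  · simp
  · have h := hf.le_slope_of_hasDerivAt hx hy hxy hd
    rw [slope_def_field, le_div_iff₀ (sub_pos.2 hxy)] at h
    linarith

/-- `ym + yr * δ` in the notation of the statement, for `g δ = f (m + ρ * δ)`. -/
noncomputable def unitSecant (g : ℝ → ℝ) (δ : ℝ) : ℝ :=
  (g 1 + g (-1)) / 2 + (g 1 - g (-1)) / 2 * δ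

section UnitSecant

variable {g : ℝ → ℝ}

lemma ConvexOn.le_unitSecant (hg : ConvexOn ℝ (Icc (-1) 1) g) {δ : ℝ} (hδ : δ ∈ Icc (-1 : ℝ) 1) :
    g δ ≤ unitSecant g δ := by
  have h := hg.2 (left_mem_Icc.2 (by norm_num : (-1 : ℝ) ≤ 1))
    (right_mem_Icc.2 (by norm_num : (-1 : ℝ) ≤ 1))
    (by linarith [hδ.2] : 0 ≤ (1 - δ) / 2) (by linarith [hδ.1] : 0 ≤ (1 + δ) / 2) (by ring)
  simp only [smul_eq_mul] at h
  rw [show (1 - δ) / 2 * -1 + (1 + δ) / 2 * 1 = δ by ring] at h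
  rw [unitSecant]
  linarith

lemma ConvexOn.sub_unitSecant_le_of_hasDerivAt (hg : ConvexOn ℝ (Icc (-1) 1) g) {δs δ : ℝ}
    (hδs : δs ∈ Icc (-1 : ℝ) 1) (hδ : δ ∈ Icc (-1 : ℝ) 1)
    (hd : HasDerivAt g ((g 1 - g (-1)) / 2) δs) :
    g δs - unitSecant g δs ≤ g δ - unitSecant g δ := by
  have h := hg.add_mul_sub_le_of_hasDerivAt hδs hδ hd
  rw [unitSecant, unitSecant]
  linarith

end UnitSecant

section UnitRange

variable {m ρ : ℝ}

lemma add_mul_mem_Icc_of_mem_Icc_neg_one_one (hρ : 0 ≤ ρ) {δ : ℝ} (hδ : δ ∈ Icc (-1 : ℝ) 1) :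
    m + ρ * δ ∈ Icc (m - ρ) (m + ρ) :=
  ⟨by nlinarith [hδ.1], by nlinarith [hδ.2]⟩

lemma sub_div_mem_Icc_neg_one_one (hρ : 0 < ρ) {x : ℝ} (hx : x ∈ Icc (m - ρ) (m + ρ)) :
    (x - m) / ρ ∈ Icc (-1 : ℝ) 1 := by
  constructor
  · rw [le_div_iff₀ hρ]; linarith [hx.1]
  · rw [div_le_iff₀ hρ]; linarith [hx.2]

lemma ConvexOn.comp_add_mul {f : ℝ → ℝ} (hf : ConvexOn ℝ (Icc (m - ρ) (m + ρ)) f)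
    (hρ : 0 ≤ ρ) :
    ConvexOn ℝ (Icc (-1) 1) fun δ ↦ f (m + ρ * δ) :=
  ((hf.translate_right m).comp_linearMap (LinearMap.mulLeft ℝ ρ)).subset
    (fun _ ↦ add_mul_mem_Icc_of_mem_Icc_neg_one_one hρ) (convex_Icc _ _)

lemma HasDerivAt.comp_add_mul {f : ℝ → ℝ} {f' δ : ℝ} (hf : HasDerivAt f f' (m + ρ * δ)) :
    HasDerivAt (fun δ ↦ f (m + ρ * δ)) (ρ * f') δ :=
  (hf.comp δ ((hasDerivAt_id δ).const_mul ρ |>.const_add m)).congr_deriv (by ring)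

end UnitRange

lemma exists_mem_Icc_eq_midpoint_add_radius_mul {a b v : ℝ} (hav : a ≤ v) (hvb : v ≤ b) :
    ∃ ε ∈ Icc (-1 : ℝ) 1, v = (a + b) / 2 + (b - a) / 2 * ε := by
  rcases (hav.trans hvb).eq_or_lt with rfl | hab
  · exact ⟨0, by norm_num, by linarith [le_antisymm hav hvb]⟩
  · have hba : 0 < b - a := sub_pos.2 hab
    refine ⟨(2 * v - a - b) / (b - a), ⟨?_, ?_⟩, ?_⟩
    · rw [le_div_iff₀ hba]; linarith
    · rw [div_le_one hba]; linarith
    · field_simp; ring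

theorem affine_inclusion_method_general (xl xu m ρ : ℝ)
    (hm : m = (xl + xu) / 2) (hρ : ρ = (xu - xl) / 2) (hρpos : 0 < ρ)
    (f f' : ℝ → ℝ)
    (hconv : ConvexOn ℝ (Set.Icc xl xu) f)
    (hderiv : ∀ x ∈ Set.Icc xl xu, HasDerivAt f (f' x) x)
    (yl yu ym yr : ℝ)
    (hyl : yl = f xl) (hyu : yu = f xu)
    (hym : ym = (yu + yl) / 2) (hyr : yr = (yu - yl) / 2)
    (r : ℝ → ℝ) (hrdef : ∀ δ, r δ = f (m + ρ * δ) - (ym + yr * δ))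
    (δs : ℝ) (hδs : δs ∈ Set.Icc (-1 : ℝ) 1)
    (hδsopt : f' (m + ρ * δs) = yr / ρ) :
    (∀ δ ∈ Set.Icc (-1 : ℝ) 1, r δs ≤ r δ ∧ r δ ≤ 0) ∧
    (∀ x ∈ Set.Icc xl xu, ∃ ε ∈ Set.Icc (-1 : ℝ) 1,
      f x = ym + (1 / 2) * r δs + yr * ((x - m) / ρ) + (1 / 2) * |r δs| * ε) := by
  obtain rfl : xl = m - ρ := by linarith
  obtain rfl : xu = m + ρ := by linarith
  set g : ℝ → ℝ := fun δ ↦ f (m + ρ * δ)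
  have hg : ConvexOn ℝ (Icc (-1) 1) g := hconv.comp_add_mul hρpos.le
  have hg_one : g 1 = yu := by simp only [g, hyu, mul_one]
  have hg_neg_one : g (-1) = yl := by simp only [g, hyl, mul_neg, mul_one, sub_eq_add_neg]
  have hr : ∀ δ, r δ = g δ - unitSecant g δ := fun δ ↦ by
    rw [hrdef, unitSecant, hg_one, hg_neg_one, hym, hyr]
  have hgd : HasDerivAt g ((g 1 - g (-1)) / 2) δs := by
    have h := (hderiv _ (add_mul_mem_Icc_of_mem_Icc_neg_one_one hρpos.le hδs)).comp_add_mul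
    rwa [hδsopt, mul_div_cancel₀ _ hρpos.ne', hyr, ← hg_one, ← hg_neg_one] at h
  have hbounds : ∀ δ ∈ Icc (-1 : ℝ) 1, r δs ≤ r δ ∧ r δ ≤ 0 := fun δ hδ ↦ by
    rw [hr, hr]
    exact ⟨hg.sub_unitSecant_le_of_hasDerivAt hδs hδ hgd, sub_nonpos.2 (hg.le_unitSecant hδ)⟩
  refine ⟨hbounds, fun x hx ↦ ?_⟩
  have hδ := sub_div_mem_Icc_neg_one_one hρpos hx
  obtain ⟨ε, hε, hrx⟩ :=
    exists_mem_Icc_eq_midpoint_add_radius_mul (hbounds _ hδ).1 (hbounds _ hδ).2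
  refine ⟨ε, hε, ?_⟩
  have hfx := hrdef ((x - m) / ρ)
  rw [mul_div_cancel₀ _ hρpos.ne', add_sub_cancel] at hfx
  rw [abs_of_nonpos (hbounds δs hδs).2]
  linarith

theorem affine_inclusion_method (xl xu m ρ : ℝ)
    (hm : m = (xl + xu) / 2) (hρ : ρ = (xu - xl) / 2) (hρpos : 0 < ρ)
    (f f' : ℝ → ℝ)
    (hconv : ConvexOn ℝ (Set.Icc xl xu) f)
    (hderiv : ∀ x ∈ Set.Icc xl xu, HasDerivAt f (f' x) x)
    (hcont : ContinuousOn f' (Set.Icc xl xu))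
    (yl yu ym yr : ℝ)
    (hyl : yl = f xl) (hyu : yu = f xu)
    (hym : ym = (yu + yl) / 2) (hyr : yr = (yu - yl) / 2)
    (r : ℝ → ℝ) (hrdef : ∀ δ, r δ = f (m + ρ * δ) - (ym + yr * δ))
    (δs : ℝ) (hδs : δs ∈ Set.Icc (-1 : ℝ) 1)
    (hδsopt : f' (m + ρ * δs) = yr / ρ) :
    (∀ δ ∈ Set.Icc (-1 : ℝ) 1, r δs ≤ r δ ∧ r δ ≤ 0) ∧
    (∀ x ∈ Set.Icc xl xu, ∃ ε ∈ Set.Icc (-1 : ℝ) 1,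
      f x = ym + (1 / 2) * r δs + yr * ((x - m) / ρ) + (1 / 2) * |r δs| * ε) :=
  affine_inclusion_method_general xl xu m ρ hm hρ hρpos f f' hconv hderiv yl yu ym yr hyl hyu hym
    hyr r hrdef δs hδs hδsopt
end

section
/- Let [x] = [x̲, x̄] ⊂ ℝ have midpoint m and radius ρ > 0 with |m| < ρ (so 0 is in the interior of [x]). Then for every x ∈ [x], there exists ε ∈ [-1,1] such that |x| = (m/ρ)·x + ((ρ² - m²)/(2ρ))·(1 + ε). -/
/-!
Since `|m / ρ| ≤ 1`, the line `x ↦ (m / ρ) x` lies below `|x|`. The secant of the convex function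
`|·|` over `[m - ρ, m + ρ]` has the same slope `m / ρ` and lies `(ρ² - m²) / ρ` higher. So on the
interval `|x|` sits in a band of width `2c`, `c = (ρ² - m²) / (2ρ)`, above the line, and
`ε ↦ (m / ρ) x + c (1 + ε)` sweeps this band as `ε` runs over `[-1, 1]`.
-/

open Set

theorem exists_eq_add_mul_one_add_of_mem_Icc {a c y : ℝ}
    (hy : y ∈ Icc a (a + 2 * c)) : ∃ ε ∈ Icc (-1 : ℝ) 1, y = a + c * (1 + ε) := by
  have hcont : ContinuousOn (fun ε : ℝ => a + c * (1 + ε)) (Icc (-1) 1) := by fun_prop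
  have hy' : y ∈ Icc (a + c * (1 + -1)) (a + c * (1 + 1)) := by
    convert hy using 2 <;> ring
  obtain ⟨ε, hε, rfl⟩ := intermediate_value_Icc (by norm_num) hcont hy'
  exact ⟨ε, hε, rfl⟩

theorem mul_le_abs_of_abs_le_one {k : ℝ} (hk : |k| ≤ 1) (x : ℝ) : k * x ≤ |x| :=
  calc k * x ≤ |k| * |x| := (le_abs_self _).trans (abs_mul k x).le
    _ ≤ |x| := mul_le_of_le_one_left (abs_nonneg x) hk

theorem abs_le_secant_of_mem_Icc {m ρ x : ℝ} (hρ : 0 < ρ) (hm : |m| ≤ ρ)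
    (hx : x ∈ Icc (m - ρ) (m + ρ)) : |x| ≤ m / ρ * x + (ρ ^ 2 - m ^ 2) / ρ := by
  obtain ⟨hm₁, hm₂⟩ := abs_le.mp hm
  obtain ⟨hx₁, hx₂⟩ := hx
  rw [div_mul_eq_mul_div, ← add_div, le_div_iff₀ hρ]
  rcases abs_cases x with ⟨h, hsign⟩ | ⟨h, hsign⟩ <;> rw [h]
  · nlinarith [mul_le_mul_of_nonneg_left hx₂ (sub_nonneg.mpr hm₂)]
  · nlinarith [mul_le_mul_of_nonneg_left hx₁ (neg_le_iff_add_nonneg.mp hm₁)]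

theorem abs_inclusion (m ρ : ℝ) (hρ : 0 < ρ) (hm : |m| < ρ) :
    ∀ x ∈ Set.Icc (m - ρ) (m + ρ), ∃ ε ∈ Set.Icc (-1 : ℝ) 1,
      |x| = (m / ρ) * x + ((ρ ^ 2 - m ^ 2) / (2 * ρ)) * (1 + ε) := by
  intro x hx
  have hslope : |m / ρ| ≤ 1 := by
    rw [abs_div, abs_of_pos hρ, div_le_one hρ]
    exact hm.le
  refine exists_eq_add_mul_one_add_of_mem_Icc ⟨mul_le_abs_of_abs_le_one hslope x, ?_⟩
  calc |x| ≤ m / ρ * x + (ρ ^ 2 - m ^ 2) / ρ := abs_le_secant_of_mem_Icc hρ hm.le hx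
    _ = m / ρ * x + 2 * ((ρ ^ 2 - m ^ 2) / (2 * ρ)) := by field_simp
end
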